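/- Let a_{n,m} be the triangle numbers. For every natural number μ ≥ 1 one has a_{2μ−1,μ−1} = μ·(2μ−1)!! = μ·(2μ)!/(2^μ · μ!); equivalently, 2^μ · μ! · a_{2μ−1,μ−1} = μ·(2μ)! as integers. -/
import Mathlib


/-- The triangle numbers `a_{n,m}`: `a_{n,0} = 1`, `a_{0,m} = 0` for `m > 0`, and
`a_{n,m} = (n - 2(m-1)) a_{n-1,m-1} + a_{n-1,m}` for `n, m > 0`. -/
def triangleNum : ℕ → ℕ → ℤ
  | _, 0 => 1
  | 0, _ + 1 => 0
  | n + 1, m + 1 => ((n : ℤ) + 1 - 2 * m) * triangleNum n m + triangleNum n (m + 1)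

lemma triangleNum_eq_zero : ∀ n m : ℕ, n + 1 < 2 * m → triangleNum n m = 0 := by
  intro n
  induction n with
  | zero =>
    intro m h
    match m with
    | m + 1 => rfl
  | succ n ih =>
    intro m h
    match m with
    | 0 => omega
    | k + 1 =>
      show ((n : ℤ) + 1 - 2 * k) * triangleNum n k + triangleNum n (k + 1) = 0
      rcases Nat.lt_or_ge (n + 1) (2 * k) with h1 | h1
      · rw [ih k h1, ih (k + 1) (by omega)]; ring
      · have hz : (n : ℤ) + 1 - 2 * k = 0 := by omega
        rw [ih (k + 1) (by omega), hz]; ring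

lemma triangleNum_formula : ∀ n m : ℕ, 2 * m ≤ n + 1 →
    (2 : ℤ) ^ m * m.factorial * ((n + 1 - 2 * m).factorial : ℤ) * triangleNum n m
      = (n + 1).factorial := by
  intro n
  induction n with
  | zero =>
    intro m h
    match m with
    | 0 => simp [triangleNum, Nat.factorial]
    | m + 1 => omega
  | succ n ih =>
    intro m h
    match m with
    | 0 => simp [triangleNum, Nat.factorial]
    | k + 1 =>
      have hk : 2 * k ≤ n := by omega
      obtain ⟨j, rfl⟩ : ∃ j, n = 2 * k + j := ⟨n - 2 * k, by omega⟩
      have hdef : triangleNum (2 * k + j + 1) (k + 1)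
          = (((2 * k + j : ℕ) : ℤ) + 1 - 2 * k) * triangleNum (2 * k + j) k
            + triangleNum (2 * k + j) (k + 1) := rfl
      rw [hdef]
      rcases j with _ | i
      · have hB := triangleNum_eq_zero (2 * k + 0) (k + 1) (by omega)
        have IH1 := ih k (by omega)
        have f1 : 2 * k + 0 + 1 - 2 * k = 1 := by omega
        rw [f1] at IH1
        have f2 : 2 * k + 0 + 1 + 1 - 2 * (k + 1) = 0 := by omega
        rw [f2, hB, Nat.factorial_succ k, Nat.factorial_succ (2 * k + 0 + 1)]
        simp only [Nat.factorial_zero, Nat.factorial_one] at IH1 ⊢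
        push_cast at IH1 ⊢
        linear_combination (2 * (k : ℤ) + 2) * IH1
      · have IH1 := ih k (by omega)
        have IH2 := ih (k + 1) (by omega)
        have f1 : 2 * k + (i + 1) + 1 - 2 * k = i + 1 + 1 := by omega
        have f2 : 2 * k + (i + 1) + 1 - 2 * (k + 1) = i := by omega
        rw [f1, Nat.factorial_succ (i + 1), Nat.factorial_succ i] at IH1
        rw [f2, Nat.factorial_succ k] at IH2
        have f3 : 2 * k + (i + 1) + 1 + 1 - 2 * (k + 1) = i + 1 := by omega
        rw [f3, Nat.factorial_succ i, Nat.factorial_succ k,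
          Nat.factorial_succ (2 * k + (i + 1) + 1)]
        push_cast at IH1 IH2 ⊢
        linear_combination (2 * ((k : ℤ) + 1)) * IH1 + ((i : ℤ) + 1) * IH2

/-- For every `μ ≥ 1`, `a_{2μ-1,μ-1} = μ·(2μ-1)!! = μ·(2μ)!/(2^μ μ!)`, i.e.
`2^μ · μ! · a_{2μ-1,μ-1} = μ·(2μ)!` as integers. -/
theorem triangleNum_subdiag (μ : ℕ) (hμ : 1 ≤ μ) :
    2 ^ μ * (μ.factorial : ℤ) * triangleNum (2 * μ - 1) (μ - 1) = μ * (2 * μ).factorial := by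
  obtain ⟨k, rfl⟩ : ∃ k, μ = k + 1 := ⟨μ - 1, by omega⟩
  have e1 : 2 * (k + 1) - 1 = 2 * k + 1 := by omega
  have e2 : k + 1 - 1 = k := by omega
  have H := triangleNum_formula (2 * k + 1) k (by omega)
  have e3 : 2 * k + 1 + 1 - 2 * k = 2 := by omega
  rw [e3] at H
  have e4 : 2 * (k + 1) = 2 * k + 1 + 1 := by omega
  rw [show Nat.factorial 2 = 2 from rfl] at H
  rw [e1, e2, e4, Nat.factorial_succ k]
  push_cast at H ⊢
  linear_combination ((k : ℤ) + 1) * H
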